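/- Let s ≥ 1 and let G ≤ Aut(T) be a group that does not stabilise the vertex 0 (i.e. some element of G moves the vertex 0). Then β_i([G,G]) ≤ N_i for every i ∈ {1,…,s−1}, where N_i is the normal closure in Bas_s(G) of ⟨β_j(G) : j ≠ i⟩. In particular, if s > 1 and G is s-split, then G is abelian. -/

import Mathlib

/-!
Groups of automorphisms of the `m`-regular rooted tree, encoded via portraits:
an automorphism is determined by the family of its labels (local actions)
`label : List (Fin m) → Equiv.Perm (Fin m)`.
-/

namespace Basilica

/-- An automorphism of the `m`-regular rooted tree, given by its portrait. -/
structure TreeAut (m : ℕ) where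
  label : List (Fin m) → Equiv.Perm (Fin m)

namespace TreeAut

variable {m : ℕ}

lemma ext_label {a b : TreeAut m} (h : ∀ u, a.label u = b.label u) : a = b := by
  cases a
  cases b
  simp only [mk.injEq]
  exact funext h

/-- The section of an automorphism at a vertex. -/
def sec (a : TreeAut m) (v : List (Fin m)) : TreeAut m := ⟨fun u => a.label (v ++ u)⟩

@[simp] lemma sec_label (a : TreeAut m) (v u : List (Fin m)) :
    (a.sec v).label u = a.label (v ++ u) := rfl

@[simp] lemma sec_nil (a : TreeAut m) : a.sec [] = a := rfl

lemma sec_sec (a : TreeAut m) (v w : List (Fin m)) : (a.sec v).sec w = a.sec (v ++ w) :=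
  ext_label fun u => by simp [List.append_assoc]

/-- The action of a tree automorphism on the vertices (finite words). -/
def apply : TreeAut m → List (Fin m) → List (Fin m)
  | _, [] => []
  | a, x :: u => a.label [] x :: (a.sec [x]).apply u

/-- The inverse action of a tree automorphism on the vertices. -/
def invApply : TreeAut m → List (Fin m) → List (Fin m)
  | _, [] => []
  | a, x :: u => (a.label [])⁻¹ x :: (a.sec [(a.label [])⁻¹ x]).invApply u

instance : One (TreeAut m) := ⟨⟨fun _ => 1⟩⟩
instance : Mul (TreeAut m) := ⟨fun a b => ⟨fun u => a.label (b.apply u) * b.label u⟩⟩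
instance : Inv (TreeAut m) := ⟨fun a => ⟨fun u => (a.label (a.invApply u))⁻¹⟩⟩

@[simp] lemma one_label (u : List (Fin m)) : (1 : TreeAut m).label u = 1 := rfl

@[simp] lemma mul_label (a b : TreeAut m) (u : List (Fin m)) :
    (a * b).label u = a.label (b.apply u) * b.label u := rfl

@[simp] lemma inv_label (a : TreeAut m) (u : List (Fin m)) :
    a⁻¹.label u = (a.label (a.invApply u))⁻¹ := rfl

@[simp] lemma one_sec (v : List (Fin m)) : (1 : TreeAut m).sec v = 1 := rfl

@[simp] lemma apply_nil (a : TreeAut m) : a.apply [] = [] := rfl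

lemma apply_cons (a : TreeAut m) (x : Fin m) (u : List (Fin m)) :
    a.apply (x :: u) = a.label [] x :: (a.sec [x]).apply u := rfl

@[simp] lemma one_apply (u : List (Fin m)) : (1 : TreeAut m).apply u = u := by
  induction u with
  | nil => rfl
  | cons x u ih => simp [apply_cons, ih]

lemma apply_append (a : TreeAut m) (v u : List (Fin m)) :
    a.apply (v ++ u) = a.apply v ++ (a.sec v).apply u := by
  induction v generalizing a with
  | nil => simp
  | cons x v ih =>
      simp only [List.cons_append, apply_cons, ih, sec_sec, List.singleton_append,
        List.nil_append]

lemma mul_sec (a b : TreeAut m) (v : List (Fin m)) :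
    (a * b).sec v = a.sec (b.apply v) * b.sec v :=
  ext_label fun u => by simp [apply_append]

lemma mul_apply (a b : TreeAut m) (u : List (Fin m)) :
    (a * b).apply u = a.apply (b.apply u) := by
  induction u generalizing a b with
  | nil => rfl
  | cons x u ih =>
      rw [apply_cons, mul_sec, ih]
      simp [apply_cons, Equiv.Perm.mul_apply]

lemma invApply_apply (a : TreeAut m) (u : List (Fin m)) : a.invApply (a.apply u) = u := by
  induction u generalizing a with
  | nil => rfl
  | cons x u ih => simp [apply_cons, invApply, ih]

lemma apply_invApply (a : TreeAut m) (u : List (Fin m)) : a.apply (a.invApply u) = u := by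
  induction u generalizing a with
  | nil => rfl
  | cons x u ih => simp [invApply, apply_cons, ih]

instance : Group (TreeAut m) where
  mul_assoc a b c := ext_label fun u => by simp [mul_apply, mul_assoc]
  one_mul a := ext_label fun u => by simp
  mul_one a := ext_label fun u => by simp
  inv_mul_cancel a := ext_label fun u => by simp [invApply_apply]

lemma apply_injective (a : TreeAut m) : Function.Injective a.apply := by
  intro x y h
  have hx := invApply_apply a x
  rw [h, invApply_apply] at hx
  exact hx.symm

@[simp] lemma apply_length (a : TreeAut m) (u : List (Fin m)) :
    (a.apply u).length = u.length := by
  induction u generalizing a with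
  | nil => rfl
  | cons x u ih => simp [apply_cons, ih]

/-- `cons ρ f` is `ρ · ψ₁⁻¹(f 0, …, f (m-1))`: the automorphism with root label `ρ`
and first-layer sections `f x`. -/
def cons (ρ : Equiv.Perm (Fin m)) (f : Fin m → TreeAut m) : TreeAut m :=
  ⟨fun u =>
    match u with
    | [] => ρ
    | x :: v => (f x).label v⟩

end TreeAut

variable {m : ℕ}

/-- The `n`-th layer stabiliser `St_G(n)` of a group `G` of tree automorphisms. -/
def layerStab (G : Subgroup (TreeAut m)) (n : ℕ) : Subgroup (TreeAut m) where
  carrier := {g | g ∈ G ∧ ∀ u : List (Fin m), u.length = n → g.apply u = u}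
  one_mem' := ⟨G.one_mem, fun u _ => TreeAut.one_apply u⟩
  mul_mem' := by
    rintro a b ⟨haG, ha⟩ ⟨hbG, hb⟩
    refine ⟨G.mul_mem haG hbG, fun u hu => ?_⟩
    rw [TreeAut.mul_apply, hb u hu, ha u hu]
  inv_mem' := by
    rintro a ⟨haG, ha⟩
    refine ⟨G.inv_mem haG, fun u hu => ?_⟩
    apply TreeAut.apply_injective a
    rw [← TreeAut.mul_apply, mul_inv_cancel, TreeAut.one_apply, ha u hu]

/-- A group of tree automorphisms acts spherically transitively if it acts
transitively on every layer. -/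
def SphericallyTransitive (G : Subgroup (TreeAut m)) : Prop :=
  ∀ u v : List (Fin m), u.length = v.length → ∃ g ∈ G, g.apply u = v

/-- A group of tree automorphisms is self-similar if it is closed under sections. -/
def SelfSimilar (G : Subgroup (TreeAut m)) : Prop :=
  ∀ g ∈ G, ∀ v : List (Fin m), g.sec v ∈ G

/-- A spherically transitive group is fractal if `st_G(u)|_u = G` for all vertices `u`. -/
def Fractal (G : Subgroup (TreeAut m)) : Prop :=
  SphericallyTransitive G ∧
    ∀ u : List (Fin m),
      {h : TreeAut m | ∃ g ∈ G, g.apply u = u ∧ g.sec u = h} = (G : Set (TreeAut m))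

/-- A spherically transitive group is strongly fractal if `St_G(1)|_x = G` for all `x ∈ X`. -/
def StronglyFractal (G : Subgroup (TreeAut m)) : Prop :=
  SphericallyTransitive G ∧
    ∀ x : Fin m,
      {h : TreeAut m | ∃ g ∈ layerStab G 1, g.sec [x] = h} = (G : Set (TreeAut m))

/-- A spherically transitive group is very strongly fractal if
`St_G(n+1)|_x = St_G(n)` for all `n` and `x ∈ X`. -/
def VeryStronglyFractal (G : Subgroup (TreeAut m)) : Prop :=
  SphericallyTransitive G ∧
    ∀ (n : ℕ) (x : Fin m),
      {h : TreeAut m | ∃ g ∈ layerStab G (n + 1), g.sec [x] = h}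
        = (layerStab G n : Set (TreeAut m))

/-- A group of tree automorphisms is contracting if it has a finite nucleus. -/
def Contracting (G : Subgroup (TreeAut m)) : Prop :=
  ∃ N : Set (TreeAut m), N.Finite ∧ N ⊆ (G : Set (TreeAut m)) ∧
    ∀ g ∈ G, ∃ k : ℕ, ∀ v : List (Fin m), k < v.length → g.sec v ∈ N

/-- A tree automorphism is finite-state if it has finitely many distinct sections. -/
def FiniteState (f : TreeAut m) : Prop :=
  {h : TreeAut m | ∃ u : List (Fin m), f.sec u = h}.Finite

/-- A tree automorphism is bounded if the number of nontrivial sections at the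
`n`-th layer is bounded uniformly in `n`. -/
def BoundedAut (f : TreeAut m) : Prop :=
  ∃ C : ℕ, ∀ n : ℕ, {u : List (Fin m) | u.length = n ∧ f.sec u ≠ 1}.ncard ≤ C

/-- The `n`-th rigid layer stabiliser: the subgroup generated by the rigid vertex
stabilisers of the vertices of the `n`-th layer. -/
def rigidLayerStab (G : Subgroup (TreeAut m)) (n : ℕ) : Subgroup (TreeAut m) :=
  Subgroup.closure {g | g ∈ G ∧ ∃ v : List (Fin m), v.length = n ∧
    ∀ u : List (Fin m), ¬ v <+: u → g.apply u = u}

/-- A weakly branch group: spherically transitive with nontrivial rigid layer stabilisers. -/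
def WeaklyBranch (G : Subgroup (TreeAut m)) : Prop :=
  SphericallyTransitive G ∧ ∀ n : ℕ, rigidLayerStab G n ≠ ⊥

/-- `H` is weakly regular branch over `K ≤ H` if `ψ₁(St_K(1)) ⊇ K × ⋯ × K`. -/
def WeaklyRegularBranchOver (H K : Subgroup (TreeAut m)) : Prop :=
  K ≤ H ∧ ∀ f : Fin m → TreeAut m, (∀ x, f x ∈ K) → TreeAut.cons 1 f ∈ K

/-- The portrait of the `i`-th Basilica monomorphism `β^s_i` applied to `g`,
computed by recursion over vertices. -/
def betaLabel [NeZero m] (s : ℕ) : List (Fin m) → ℕ → TreeAut m → Equiv.Perm (Fin m)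
  | [], i, g => if i = 0 then g.label [] else 1
  | x :: u, i, g =>
      if i = 0 then betaLabel s u (s - 1) (g.sec [x])
      else if x = 0 then betaLabel s u (i - 1) g else 1

/-- The Basilica monomorphism `β^s_i : Aut(T) → Aut(T)`, satisfying
`β_i(g) = ψ₁⁻¹(β_{i-1}(g), 1, …, 1)` for `1 ≤ i ≤ s-1` and
`β_0(g) = g|^ε · ψ₁⁻¹(β_{s-1}(g|_0), …, β_{s-1}(g|_{m-1}))`. -/
def betaAut [NeZero m] (s i : ℕ) (g : TreeAut m) : TreeAut m := ⟨fun u => betaLabel s u i g⟩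

/-- The `s`-th Basilica group of `G`. -/
def basilica [NeZero m] (s : ℕ) (G : Subgroup (TreeAut m)) : Subgroup (TreeAut m) :=
  Subgroup.closure {b | ∃ g ∈ G, ∃ i < s, b = betaAut s i g}

/-- The subgroup `S_i = ⟨β_j(G) : j ≠ i⟩` of the `s`-th Basilica group. -/
def Ssub [NeZero m] (s i : ℕ) (G : Subgroup (TreeAut m)) : Subgroup (TreeAut m) :=
  Subgroup.closure {b | ∃ g ∈ G, ∃ j < s, j ≠ i ∧ b = betaAut s j g}

/-- The normal closure `N_i` of `S_i` in the `s`-th Basilica group of `G`. -/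
def Nsub [NeZero m] (s i : ℕ) (G : Subgroup (TreeAut m)) : Subgroup (TreeAut m) :=
  Subgroup.closure {x | ∃ b ∈ basilica s G, ∃ y ∈ Ssub s i G, x = b * y * b⁻¹}

/-- The `i`-th splitting kernel `K_i = β_i⁻¹(β_i(G) ∩ N_i)` of `G`, as a set. -/
def Kset [NeZero m] (s i : ℕ) (G : Subgroup (TreeAut m)) : Set (TreeAut m) :=
  {g | g ∈ G ∧ betaAut s i g ∈ Nsub s i G}

/-- The portrait of the monomorphism `π_i` (for the `d`-fold diagonal construction). -/
def piLabel (d : ℕ) : List (Fin m) → ℕ → TreeAut m → Equiv.Perm (Fin m)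
  | [], i, g => if i = 0 then g.label [] else 1
  | x :: u, i, g =>
      if i = 0 then piLabel d u (d - 1) (g.sec [x])
      else piLabel d u (i - 1) g

/-- The monomorphism `π_i : Aut(T) → Aut(T)`, satisfying
`π_0(g) = g|^ε · ψ₁⁻¹(π_{d-1}(g|_0), …, π_{d-1}(g|_{m-1}))` and
`π_i(g) = ψ₁⁻¹(π_{i-1}(g), …, π_{i-1}(g))` for `1 ≤ i ≤ d-1`. -/
def piAut (d i : ℕ) (g : TreeAut m) : TreeAut m := ⟨fun u => piLabel d u i g⟩

/-- The generator of the `m`-adic odometer: `a = σ · ψ₁⁻¹(a, 1, …, 1)` with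
`σ = (0 1 … m-1)`. -/
def odometer (m : ℕ) [NeZero m] : TreeAut m :=
  ⟨fun u => if ∀ x ∈ u, x = 0 then finRotate m else 1⟩

/-- The group `O_m^d = D_d(O_m) = ⟨π_i(a) : 0 ≤ i ≤ d-1⟩`. -/
def OdPow (m d : ℕ) [NeZero m] : Subgroup (TreeAut m) :=
  Subgroup.closure {x | ∃ i < d, x = piAut d i (odometer m)}

/-- The group `Γ` of all automorphisms all of whose labels are powers of the
cycle `σ = (0 1 … m-1)`. -/
def Gamma (m : ℕ) : Subgroup (TreeAut m) where
  carrier := {g | ∀ u : List (Fin m), g.label u ∈ Subgroup.zpowers (finRotate m)}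
  one_mem' := by
    intro u
    rw [TreeAut.one_label]
    exact one_mem _
  mul_mem' := by
    intro a b ha hb u
    rw [TreeAut.mul_label]
    exact mul_mem (ha _) (hb _)
  inv_mem' := by
    intro a ha u
    rw [TreeAut.inv_label]
    exact inv_mem (ha _)

/-- The Hausdorff dimension of `G ≤ Γ` relative to `Γ`. -/
noncomputable def hdim (m : ℕ) (G : Subgroup (TreeAut m)) : ℝ :=
  Filter.liminf (fun n : ℕ =>
    Real.logb m ((layerStab G n).relIndex G) /
      Real.logb m ((layerStab (Gamma m) n).relIndex (Gamma m))) Filter.atTop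

/-- The series of obstructions `o_G(n) = m·log_m|L_G(n-1)| - log_m|L_G(n)|` (for `n ≥ 1`),
where `L_G(n) = St_G(n)/St_G(n+1)`. -/
noncomputable def obstruction (m : ℕ) (G : Subgroup (TreeAut m)) (n : ℕ) : ℝ :=
  m * Real.logb m ((layerStab G n).relIndex (layerStab G (n - 1)))
    - Real.logb m ((layerStab G (n + 1)).relIndex (layerStab G n))

/-- The permutation group induced by `G` on the first layer acts regularly on `X`. -/
def RegularRootAction (G : Subgroup (TreeAut m)) : Prop :=
  (∀ x y : Fin m, ∃ g ∈ G, g.label [] x = y) ∧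
    ∀ g ∈ G, ∀ x : Fin m, g.label [] x = x → g.label [] = 1


/-!
Take `a ∈ G` with `a(0) ≠ 0` and `i ≥ 1`. Then `b = β₀(a)` lies in `S_i ≤ N_i`, while `k = β_i(g)`
and `l = β_i(h)` act only below the vertex `0`. Hence `b k b⁻¹` acts only below `a(0) ≠ 0` and
commutes with `l`. Since `N_i` is normalised by the Basilica group and contains `b`, the elements
`k` and `b k b⁻¹` agree modulo `N_i`, so `⁅k, l⁆ ≡ ⁅b k b⁻¹, l⁆ = 1` modulo `N_i`. As `β_i` is a
homomorphism, this gives `β_i([G, G]) ≤ N_i`; if `G` is `s`-split with `s > 1`, the kernel `K_1`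
then contains `[G, G]` and is trivial.
-/

end Basilica

open scoped commutatorElement

theorem Subgroup.commutatorElement_mem_of_commute_conj {G : Type*} [Group G] {N : Subgroup G}
    {b k l : G} (hb : b ∈ N) (hk : k ∈ normalizer N) (hl : l ∈ normalizer N)
    (hcomm : Commute (b * k * b⁻¹) l) : ⁅k, l⁆ ∈ N := by
  have hd : ⁅k, b⁆ ∈ N := mul_mem ((mem_normalizer_iff.mp hk b).mp hb) (inv_mem hb)
  have hd' : l * ⁅k, b⁆⁻¹ * l⁻¹ ∈ N := (mem_normalizer_iff.mp hl _).mp (inv_mem hd)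
  have key : ⁅k, l⁆ = ⁅k, b⁆ * (l * ⁅k, b⁆⁻¹ * l⁻¹) :=
    calc ⁅k, l⁆ = ⁅k, b⁆ * ((b * k * b⁻¹) * l * (b * k * b⁻¹)⁻¹) * ⁅k, b⁆⁻¹ * l⁻¹ := by
          simp only [commutatorElement_def]; group
      _ = ⁅k, b⁆ * (l * ⁅k, b⁆⁻¹ * l⁻¹) := by rw [hcomm.eq, mul_inv_cancel_right]; group
  exact key ▸ mul_mem hd hd'

namespace Basilica

namespace TreeAut

variable {m : ℕ}

lemma label_cons (a : TreeAut m) (x : Fin m) (u : List (Fin m)) :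
    a.label (x :: u) = (a.sec [x]).label u := rfl

lemma apply_singleton (a : TreeAut m) (x : Fin m) : a.apply [x] = [a.label [] x] := rfl

lemma inv_label_nil (a : TreeAut m) : a⁻¹.label [] = (a.label [])⁻¹ := rfl

lemma mul_label_nil (a b : TreeAut m) : (a * b).label [] = a.label [] * b.label [] := rfl

lemma mul_sec_singleton (a b : TreeAut m) (x : Fin m) :
    (a * b).sec [x] = a.sec [b.label [] x] * b.sec [x] := mul_sec a b [x]

lemma ext_sec {a b : TreeAut m} (h₀ : a.label [] = b.label [])
    (h₁ : ∀ x, a.sec [x] = b.sec [x]) : a = b :=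
  ext_label fun
    | [] => h₀
    | x :: u => by rw [label_cons, label_cons, h₁]

def SupportedBelow (x : Fin m) (f : TreeAut m) : Prop :=
  f.label [] = 1 ∧ ∀ y ≠ x, f.sec [y] = 1

lemma SupportedBelow.commute {x x' : Fin m} (hne : x ≠ x') {f f' : TreeAut m}
    (hf : SupportedBelow x f) (hf' : SupportedBelow x' f') : Commute f f' := by
  refine ext_sec (by rw [mul_label_nil, mul_label_nil, hf.1, hf'.1]) fun y => ?_
  rw [mul_sec_singleton, mul_sec_singleton, hf.1, hf'.1, Equiv.Perm.one_apply]
  rcases eq_or_ne y x with rfl | hy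
  · rw [hf'.2 y hne, mul_one, one_mul]
  · rw [hf.2 y hy, mul_one, one_mul]

lemma SupportedBelow.conj {x : Fin m} {f : TreeAut m} (hf : SupportedBelow x f)
    (e : TreeAut m) : SupportedBelow (e.label [] x) (e * f * e⁻¹) := by
  refine ⟨by rw [mul_label_nil, mul_label_nil, inv_label_nil, hf.1, mul_one, mul_inv_cancel],
    fun y hy => ?_⟩
  set z := (e.label [])⁻¹ y
  have hz : z ≠ x := fun h => hy (by simp [← h, z])
  calc (e * f * e⁻¹).sec [y] = e.sec [z] * e⁻¹.sec [y] := by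
        rw [mul_sec_singleton, mul_sec_singleton, inv_label_nil, hf.1, hf.2 z hz, mul_one]
        rfl
    _ = (e * e⁻¹).sec [y] := by rw [mul_sec_singleton, inv_label_nil]
    _ = 1 := by rw [mul_inv_cancel, one_sec]

end TreeAut

open TreeAut

variable {m : ℕ} [NeZero m]

lemma betaAut_label_nil (s i : ℕ) (g : TreeAut m) :
    (betaAut s i g).label [] = if i = 0 then g.label [] else 1 := rfl

lemma betaAut_sec_singleton (s i : ℕ) (g : TreeAut m) (x : Fin m) :
    (betaAut s i g).sec [x] = if i = 0 then betaAut s (s - 1) (g.sec [x])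
      else if x = 0 then betaAut s (i - 1) g else 1 := by
  split_ifs <;> exact ext_label fun u => by simp [betaAut, betaLabel, *]

lemma betaAut_mul (s i : ℕ) (g h : TreeAut m) :
    betaAut s i (g * h) = betaAut s i g * betaAut s i h := by
  suffices ∀ u i (g h : TreeAut m),
      (betaAut s i (g * h)).label u = (betaAut s i g * betaAut s i h).label u from
    ext_label (this · i g h)
  intro u
  induction u with
  | nil => intro i g h; by_cases hi : i = 0 <;> simp [betaAut_label_nil, hi]
  | cons x u ih =>
      intro i g h
      simp only [label_cons, mul_sec_singleton, betaAut_sec_singleton, betaAut_label_nil]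
      split_ifs <;> simp_all

def betaHom (s i : ℕ) : TreeAut m →* TreeAut m :=
  MonoidHom.mk' (betaAut s i) (betaAut_mul s i)

lemma betaAut_supportedBelow_zero {s i : ℕ} (hi : i ≠ 0) (g : TreeAut m) :
    SupportedBelow 0 (betaAut s i g) :=
  ⟨by rw [betaAut_label_nil, if_neg hi], fun y hy => by
    rw [betaAut_sec_singleton, if_neg hi, if_neg hy]⟩

lemma betaAut_mem_basilica {s i : ℕ} (hi : i < s) {G : Subgroup (TreeAut m)} {g : TreeAut m}
    (hg : g ∈ G) : betaAut s i g ∈ basilica s G :=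
  Subgroup.subset_closure ⟨g, hg, i, hi, rfl⟩

lemma betaAut_mem_Nsub {s i j : ℕ} (hj : j < s) (hji : j ≠ i) {G : Subgroup (TreeAut m)}
    {g : TreeAut m} (hg : g ∈ G) : betaAut s j g ∈ Nsub s i G :=
  Subgroup.subset_closure ⟨1, one_mem _, _, Subgroup.subset_closure ⟨g, hg, j, hj, hji, rfl⟩,
    by rw [one_mul, inv_one, mul_one]⟩

lemma basilica_le_normalizer_Nsub (s i : ℕ) (G : Subgroup (TreeAut m)) :
    basilica s G ≤ Subgroup.normalizer (Nsub s i G) := by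
  refine Subgroup.le_normalizer_closure_iff.mpr ?_
  rintro c hc _ ⟨b, hb, y, hy, rfl⟩
  exact Subgroup.subset_closure ⟨c * b, mul_mem hc hb, y, hy, by group⟩

lemma commutatorElement_betaAut_mem_Nsub {s i : ℕ} (hi : i ≠ 0) (his : i < s)
    {G : Subgroup (TreeAut m)} {a : TreeAut m} (ha : a ∈ G) (ha0 : a.label [] 0 ≠ 0)
    {g h : TreeAut m} (hg : g ∈ G) (hh : h ∈ G) :
    ⁅betaAut s i g, betaAut s i h⁆ ∈ Nsub s i G := by
  have hbN : betaAut s 0 a ∈ Nsub s i G := betaAut_mem_Nsub (by omega) (Ne.symm hi) ha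
  have hsupp : SupportedBelow (a.label [] 0)
      (betaAut s 0 a * betaAut s i g * (betaAut s 0 a)⁻¹) :=
    (betaAut_supportedBelow_zero hi g).conj _
  exact Subgroup.commutatorElement_mem_of_commute_conj hbN
    (basilica_le_normalizer_Nsub s i G (betaAut_mem_basilica his hg))
    (basilica_le_normalizer_Nsub s i G (betaAut_mem_basilica his hh))
    (hsupp.commute ha0 (betaAut_supportedBelow_zero hi h))

theorem beta_commutator_le_Nsub_general {m : ℕ} [NeZero m]
    (s : ℕ) (G : Subgroup (TreeAut m))
    (hG : ∃ g ∈ G, g.apply [(0 : Fin m)] ≠ [(0 : Fin m)]) :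
    (∀ i, 1 ≤ i → i < s → ∀ x ∈ ⁅G, G⁆, betaAut s i x ∈ Nsub s i G) ∧
    (1 < s → (∀ i < s, ∀ g ∈ Kset s i G, g = 1) →
      ∀ g ∈ G, ∀ h ∈ G, g * h = h * g) := by
  obtain ⟨a, ha, ha0⟩ := hG
  have hmoves : a.label [] 0 ≠ 0 := fun h => ha0 (by rw [apply_singleton, h])
  have hcomm : ∀ i, 1 ≤ i → i < s → ∀ x ∈ ⁅G, G⁆, betaAut s i x ∈ Nsub s i G := by
    intro i hi his x hx
    refine (Subgroup.commutator_le.mpr fun g hg h hh => ?_ :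
      ⁅G, G⁆ ≤ (Nsub s i G).comap (betaHom s i)) hx
    rw [Subgroup.mem_comap, map_commutatorElement]
    exact commutatorElement_betaAut_mem_Nsub (by omega) his ha hmoves hg hh
  refine ⟨hcomm, fun hs hsplit g hg h hh => commutatorElement_eq_one_iff_mul_comm.mp ?_⟩
  have hgh : ⁅g, h⁆ ∈ ⁅G, G⁆ := Subgroup.commutator_mem_commutator hg hh
  exact hsplit 1 hs _ ⟨Subgroup.commutator_le_self G hgh, hcomm 1 le_rfl hs _ hgh⟩

/-- Let `s ≥ 1` and let `G ≤ Aut(T)` not stabilise the vertex `0`.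
Then `β_i([G,G]) ≤ N_i` for all `i ∈ {1, …, s-1}`; in particular, if `s > 1` and `G` is
`s`-split, then `G` is abelian. -/
theorem beta_commutator_le_Nsub {m : ℕ} [NeZero m] (hm : 2 ≤ m)
    (s : ℕ) (hs : 1 ≤ s) (G : Subgroup (TreeAut m))
    (hG : ∃ g ∈ G, g.apply [(0 : Fin m)] ≠ [(0 : Fin m)]) :
    (∀ i, 1 ≤ i → i < s → ∀ x ∈ ⁅G, G⁆, betaAut s i x ∈ Nsub s i G) ∧
    (1 < s → (∀ i < s, ∀ g ∈ Kset s i G, g = 1) →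
      ∀ g ∈ G, ∀ h ∈ G, g * h = h * g) :=
  beta_commutator_le_Nsub_general s G hG

end Basilica
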